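/- arXiv:1805.07953 — 3 statements merged into one kernel-verified Lean document; each statement's English description precedes it below -/
import Mathlib

section
/- Let $\Delta$ be a root system with base $\Sigma$, let $I \subset \Sigma$, and let $\pi$ be the quotient projection modulo the span of $I$. Set $R = \pi(\Delta) \setminus \{0\}$. If $\Sigma'$ is any base of $\Delta$, then $\pi(\Sigma') \setminus \{0\}$ is a base of $R$ if and only if $\Sigma'$ contains a base of the subsystem $\Delta \cap \langle I \rangle$. -/
variable {V : Type*} [AddCommGroup V] [Module ℝ V]

def IsRootSystem (Δ : Set V) : Prop :=
  Δ.Finite ∧ (0 : V) ∉ Δ ∧ (∀ α ∈ Δ, -α ∈ Δ) ∧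
    ∀ α ∈ Δ, ∃ f : V →ₗ[ℝ] ℝ, f α = 2 ∧ (∀ β ∈ Δ, ∃ n : ℤ, f β = (n : ℝ)) ∧
      ∀ β ∈ Δ, β - f β • α ∈ Δ

def IsBase {W : Type*} [AddCommGroup W] [Module ℝ W] (Δ S : Set W) : Prop :=
  S ⊆ Δ ∧ LinearIndependent ℝ ((↑) : S → W) ∧
    ∀ β ∈ Δ, ∃ c : W →₀ ℤ, ↑c.support ⊆ S ∧
      β = c.sum (fun v n => (n : ℝ) • v) ∧ ((∀ v, 0 ≤ c v) ∨ (∀ v, c v ≤ 0))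

/-!
Roots are sign-coherent integer combinations of the base `Sg`. Pushing such a combination forward
along `π` and discarding the coefficient at `0` gives a sign-coherent combination of `π(Sg) \ {0}`
with the image root as its value, so `π(Sg) \ {0}` is a base of `R` as soon as it is linearly
independent. If it is, a root `β ∈ ⟨I⟩` pushes forward to the zero combination; each coefficient of
it is a sum of coefficients of `β` of a single sign, so all coefficients of `β` at elements outside
`⟨I⟩` vanish and `Sg ∩ ⟨I⟩` is a base of `Δ ∩ ⟨I⟩`. Conversely, if `B ⊆ Sg` is a base of
`Δ ∩ ⟨I⟩`, then `⟨I⟩ = ⟨B⟩` because `I ⊆ Δ ∩ ⟨I⟩`; hence `π(Sg) \ {0} = π(Sg \ B)`, and `π` is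
injective on `⟨Sg \ B⟩`.
-/

open Set Submodule Finsupp

namespace Finsupp

variable {α β M : Type*}

lemma apply_eq_zero_of_mapDomain_apply_eq_zero [AddCommMonoid M] [PartialOrder M]
    [IsOrderedAddMonoid M] {c : α →₀ M} (hc : 0 ≤ c ∨ c ≤ 0) (f : α → β) {a : α}
    (h : c.mapDomain f (f a) = 0) : c a = 0 := by
  classical
  by_cases ha : a ∈ c.support
  · rw [mapDomain_apply_eq_sum] at h
    have hmem : a ∈ {i ∈ c.support | f i = f a} := Finset.mem_filter.2 ⟨ha, rfl⟩
    rcases hc with hc | hc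
    · exact (Finset.sum_eq_zero_iff_of_nonneg fun i _ => hc i).1 h a hmem
    · exact (Finset.sum_eq_zero_iff_of_nonpos fun i _ => hc i).1 h a hmem
  · exact notMem_support_iff.1 ha

lemma support_erase_mapDomain_subset [Zero β] [AddCommMonoid M] (f : α → β) (c : α →₀ M) :
    ↑((c.mapDomain f).erase 0).support ⊆ f '' c.support \ {0} := by
  classical
  intro x hx
  rw [Finset.mem_coe, support_erase, Finset.mem_erase] at hx
  obtain ⟨a, ha, rfl⟩ := Finset.mem_image.1 (mapDomain_support hx.2)
  exact ⟨⟨a, ha, rfl⟩, hx.1⟩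

lemma erase_mapDomain_nonneg_or_nonpos [AddCommMonoid M] [PartialOrder M] [IsOrderedAddMonoid M]
    {c : α →₀ M} (hc : 0 ≤ c ∨ c ≤ 0) (f : α → β) (b : β) :
    0 ≤ (c.mapDomain f).erase b ∨ (c.mapDomain f).erase b ≤ 0 := by
  classical
  refine hc.imp (fun h x => ?_) (fun h x => ?_) <;> rw [erase_apply] <;> split_ifs
  exacts [le_rfl, mapDomain_nonneg h x, le_rfl, mapDomain_nonpos h x]

end Finsupp

section Bases

variable {W W' : Type*} [AddCommGroup W] [Module ℝ W] [AddCommGroup W'] [Module ℝ W']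

lemma sum_intCast_smul_eq_linearCombination (c : W →₀ ℤ) :
    c.sum (fun v n => (n : ℝ) • v) = linearCombination ℤ id c := by
  simp [linearCombination_apply, Int.cast_smul_eq_zsmul]

lemma linearCombination_erase_mapDomain (f : W →ₗ[ℝ] W') (c : W →₀ ℤ) :
    linearCombination ℤ id ((c.mapDomain f).erase 0) = f (linearCombination ℤ id c) := by
  calc linearCombination ℤ id ((c.mapDomain f).erase 0)
      = linearCombination ℤ id (c.mapDomain f) := by
        conv_rhs => rw [← erase_add_single 0 (c.mapDomain f)]
        simp
    _ = linearCombination ℤ f c := by rw [linearCombination_mapDomain]; rfl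
    _ = f (linearCombination ℤ id c) :=
      (apply_linearCombination_id ℤ (f.restrictScalars ℤ) c).symm

lemma LinearIndepOn.eq_zero_of_linearCombination_int_eq_zero {S : Set W}
    (hS : LinearIndepOn ℝ id S) {c : W →₀ ℤ} (hc : ↑c.support ⊆ S)
    (h : linearCombination ℤ id c = 0) : c = 0 :=
  linearIndepOn_iff.1 (LinearIndependent.restrict_scalars' ℤ hS) c hc h

lemma isBase_iff {Δ S : Set W} :
    IsBase Δ S ↔ S ⊆ Δ ∧ LinearIndepOn ℝ id S ∧ ∀ β ∈ Δ, ∃ c : W →₀ ℤ,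
      ↑c.support ⊆ S ∧ linearCombination ℤ id c = β ∧ (0 ≤ c ∨ c ≤ 0) := by
  simp only [IsBase, LinearIndepOn, sum_intCast_smul_eq_linearCombination, Finsupp.le_def,
    Finsupp.coe_zero, Pi.zero_apply, @eq_comm _ _ (linearCombination ℤ _root_.id _)]
  rfl

lemma IsBase.subset_span {Δ S : Set W} (h : IsBase Δ S) : Δ ⊆ span ℝ S := by
  intro β hβ
  obtain ⟨c, hcS, rfl, -⟩ := (isBase_iff.1 h).2.2 β hβ
  refine span_le_restrictScalars ℤ ℝ S ?_
  rw [← image_id S]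
  exact mem_span_image_iff_linearCombination ℤ |>.2 ⟨c, hcS, rfl⟩

lemma IsBase.image_sdiff_zero {Δ S : Set W} (hS : IsBase Δ S) (f : W →ₗ[ℝ] W')
    (hf : LinearIndepOn ℝ id (f '' S \ {0})) : IsBase (f '' Δ \ {0}) (f '' S \ {0}) := by
  obtain ⟨hSΔ, -, hrepr⟩ := isBase_iff.1 hS
  refine isBase_iff.2 ⟨sdiff_subset_sdiff_left (image_mono hSΔ), hf, ?_⟩
  rintro - ⟨⟨β, hβ, rfl⟩, -⟩
  obtain ⟨c, hcS, rfl, hsign⟩ := hrepr β hβ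
  refine ⟨(c.mapDomain f).erase 0, ?_, linearCombination_erase_mapDomain f c, ?_⟩
  · exact (support_erase_mapDomain_subset f c).trans (sdiff_subset_sdiff_left (image_mono hcS))
  · exact erase_mapDomain_nonneg_or_nonpos hsign f 0

lemma IsBase.inter_ker {Δ S : Set W} (hS : IsBase Δ S) (f : W →ₗ[ℝ] W')
    (hf : LinearIndepOn ℝ id (f '' S \ {0})) :
    IsBase (Δ ∩ LinearMap.ker f) (S ∩ LinearMap.ker f) := by
  obtain ⟨hSΔ, hSli, hrepr⟩ := isBase_iff.1 hS
  refine isBase_iff.2 ⟨inter_subset_inter_left _ hSΔ, hSli.mono inter_subset_left, ?_⟩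
  rintro β ⟨hβ, hβker⟩
  obtain ⟨c, hcS, rfl, hsign⟩ := hrepr β hβ
  have hpush : (c.mapDomain f).erase 0 = 0 := by
    refine hf.eq_zero_of_linearCombination_int_eq_zero ?_ ?_
    · exact (support_erase_mapDomain_subset f c).trans (sdiff_subset_sdiff_left (image_mono hcS))
    · rwa [linearCombination_erase_mapDomain]
  refine ⟨c, fun a ha => ⟨hcS ha, ?_⟩, rfl, hsign⟩
  by_contra hfa
  refine mem_support_iff.1 ha (apply_eq_zero_of_mapDomain_apply_eq_zero hsign f ?_)
  rw [← erase_ne hfa, hpush, Finsupp.coe_zero, Pi.zero_apply]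

lemma LinearIndepOn.image_sdiff_zero {S B : Set W} (hS : LinearIndepOn ℝ id S) (hBS : B ⊆ S)
    (f : W →ₗ[ℝ] W') (hker : LinearMap.ker f = span ℝ B) : LinearIndepOn ℝ id (f '' S \ {0}) := by
  have hzero : ∀ s ∈ S, f s = 0 ↔ s ∈ B := fun s hs => by
    rw [← LinearMap.mem_ker, hker]
    exact ⟨fun h => (hS.mono hBS).mem_span_iff_id.1 h (hS.mono (insert_subset hs hBS)),
      (subset_span ·)⟩
  have himage : f '' S \ {0} = f '' (S \ B) := by
    ext x
    constructor
    · rintro ⟨⟨s, hs, rfl⟩, h0⟩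
      exact ⟨s, ⟨hs, fun hB => h0 ((hzero s hs).2 hB)⟩, rfl⟩
    · rintro ⟨s, ⟨hs, hsB⟩, rfl⟩
      exact ⟨⟨s, hs, rfl⟩, fun h0 => hsB ((hzero s hs).1 h0)⟩
  have hdisj : Disjoint (span ℝ (S \ B)) (LinearMap.ker f) := by
    rw [hker]
    refine ((linearIndepOn_id_union_iff disjoint_sdiff_left).1 ?_).2.2
    rwa [sdiff_union_of_subset hBS]
  rw [himage]
  exact (hS.mono sdiff_subset).image hdisj

end Bases

theorem stmt3_general (Δ Sg₀ I Sg : Set V)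
    (h₀ : IsBase Δ Sg₀) (hI : I ⊆ Sg₀) (hSg : IsBase Δ Sg) :
    IsBase (((Submodule.span ℝ I).mkQ '' Δ) \ {0})
        (((Submodule.span ℝ I).mkQ '' Sg) \ {0}) ↔
      ∃ B ⊆ Sg, IsBase (Δ ∩ (Submodule.span ℝ I : Set V)) B := by
  set K := span ℝ I
  constructor
  · intro h
    refine ⟨Sg ∩ K, inter_subset_left, ?_⟩
    simpa only [ker_mkQ] using hSg.inter_ker K.mkQ (isBase_iff.1 h).2.1
  · rintro ⟨B, hBSg, hB⟩
    have hker : LinearMap.ker K.mkQ = span ℝ B := by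
      rw [ker_mkQ]
      refine le_antisymm (span_le.2 fun i hi => hB.subset_span ⟨h₀.1 (hI hi), subset_span hi⟩)
        (span_le.2 fun b hb => (hB.1 hb).2)
    exact hSg.image_sdiff_zero K.mkQ ((isBase_iff.1 hSg).2.1.image_sdiff_zero hBSg K.mkQ hker)

/-- let `Δ` be a root system with base `Sg₀`, `I ⊆ Sg₀`, `π` the quotient map
modulo `span I`, and `R = π(Δ) \ {0}`. For any base `Sg` of `Δ`, `π(Sg) \ {0}` is a base of
`R` iff `Sg` contains a base of `Δ ∩ ⟨I⟩`. -/
theorem stmt3 (Δ Sg₀ I Sg : Set V) (hΔ : IsRootSystem Δ)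
    (h₀ : IsBase Δ Sg₀) (hI : I ⊆ Sg₀) (hSg : IsBase Δ Sg) :
    IsBase (((Submodule.span ℝ I).mkQ '' Δ) \ {0})
        (((Submodule.span ℝ I).mkQ '' Sg) \ {0}) ↔
      ∃ B ⊆ Sg, IsBase (Δ ∩ (Submodule.span ℝ I : Set V)) B :=
  stmt3_general Δ Sg₀ I Sg h₀ hI hSg
end

section
/- Let $\Delta$ be a root system with base $\Sigma$ and let $I \subset J \subset \Sigma$ with projections $\pi_I, \pi_J$ and induced projection $\pi_{IJ}$ satisfying $\pi_J = \pi_{IJ} \circ \pi_I$. For nonzero $\nu \in \pi_J(\Delta)$, the fiber graphs satisfy: the $\pi_I$-image of the graph $\Gamma^{\nu}_{\Delta,\Sigma,J}$ (vertices $\pi_J^{-1}(\nu) \cap \Delta$, edges labelled by elements of $\pm J$) has the same vertex set as $\Gamma^{\nu}_{\pi_I(\Delta), \pi_I(\Sigma)\setminus\{0\}, \pi_I(J)\setminus\{0\}}$, and its edge set is contained in the edge set of the latter. -/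
variable {V : Type*} [AddCommGroup V] [Module ℝ V]

/-- let `Δ` be a root system with base `Sg`, `I ⊆ J ⊆ Sg`, projections
`πI`, `πJ` and induced map `f` with `πJ = f ∘ πI`.  For nonzero `ν ∈ πJ(Δ)`, the `πI`-image
of the fiber graph `Γ^ν_{Δ,Sg,J}` has the same vertex set as the fiber graph
`Γ^ν_{πI(Δ), πI(Sg)\{0}, πI(J)\{0}}`, and its edge set is contained in that of the latter. -/
theorem stmt10 (Δ Sg I J : Set V) (hΔ : IsRootSystem Δ) (hSg : IsBase Δ Sg)
    (hIJ : I ⊆ J) (hJSg : J ⊆ Sg)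
    (f : (V ⧸ Submodule.span ℝ I) → (V ⧸ Submodule.span ℝ J))
    (hf : ∀ v : V, f ((Submodule.span ℝ I).mkQ v) = (Submodule.span ℝ J).mkQ v)
    (ν : V ⧸ Submodule.span ℝ J) (hν : ν ≠ 0) (hνΔ : ν ∈ (Submodule.span ℝ J).mkQ '' Δ) :
    -- same vertex sets:
    ((Submodule.span ℝ I).mkQ '' {α ∈ Δ | (Submodule.span ℝ J).mkQ α = ν} =
      {x ∈ (Submodule.span ℝ I).mkQ '' Δ | f x = ν}) ∧
    -- projected non-loop edges are edges of the quotient fiber graph: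
    (∀ a b : V ⧸ Submodule.span ℝ I,
      (a ≠ b ∧ ∃ μ ∈ {α ∈ Δ | (Submodule.span ℝ J).mkQ α = ν},
        ∃ μ' ∈ {α ∈ Δ | (Submodule.span ℝ J).mkQ α = ν},
          μ - μ' ∈ J ∪ (-J) ∧ (Submodule.span ℝ I).mkQ μ = a ∧
            (Submodule.span ℝ I).mkQ μ' = b) →
      (a ∈ {x ∈ (Submodule.span ℝ I).mkQ '' Δ | f x = ν} ∧
       b ∈ {x ∈ (Submodule.span ℝ I).mkQ '' Δ | f x = ν} ∧
       a - b ∈ (((Submodule.span ℝ I).mkQ '' J) \ {0}) ∪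
         (-(((Submodule.span ℝ I).mkQ '' J) \ {0})))) := by
  constructor
  · ext x
    constructor
    · rintro ⟨α, ⟨hα, hαν⟩, rfl⟩
      exact ⟨⟨α, hα, rfl⟩, by rw [hf]; exact hαν⟩
    · rintro ⟨⟨α, hα, rfl⟩, hx⟩
      rw [hf] at hx
      exact ⟨α, ⟨hα, hx⟩, rfl⟩
  · rintro a b ⟨hab, μ, ⟨hμΔ, hμν⟩, μ', ⟨hμ'Δ, hμ'ν⟩, hdiff, rfl, rfl⟩
    refine ⟨⟨⟨μ, hμΔ, rfl⟩, by rw [hf]; exact hμν⟩,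
      ⟨⟨μ', hμ'Δ, rfl⟩, by rw [hf]; exact hμ'ν⟩, ?_⟩
    have hsub : (Submodule.span ℝ I).mkQ μ - (Submodule.span ℝ I).mkQ μ'
        = (Submodule.span ℝ I).mkQ (μ - μ') := by simp
    have hne : (Submodule.span ℝ I).mkQ (μ - μ') ≠ 0 := by
      rw [← hsub]; exact sub_ne_zero.mpr hab
    rcases hdiff with h | h
    · exact Or.inl ⟨hsub ▸ ⟨μ - μ', h, rfl⟩, hsub ▸ hne⟩
    · refine Or.inr ?_
      rw [Set.mem_neg]
      refine ⟨⟨μ' - μ, by simpa using h, ?_⟩, ?_⟩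
      · simp [hsub]
      · simpa [hsub] using neg_ne_zero.mpr hne
end

section
/- Let $\Delta$ be a root system with base $\Sigma$, $I \subset J \subset \Sigma$, and $\nu$ a nonzero element of $\pi_J(\Delta)$. If the fiber graph $\Gamma^{\nu}_{\Delta,\Sigma,J}$ (vertices $\pi_J^{-1}(\nu) \cap \Delta$, edges between roots differing by an element of $\pm J$) is connected, then the fiber graph $\Gamma^{\nu}_{\pi_I(\Delta), \pi_I(\Sigma)\setminus\{0\}, \pi_I(J)\setminus\{0\}}$ in the quotient is connected. -/
variable {V : Type*} [AddCommGroup V] [Module ℝ V]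

lemma map_path' {A B : Type*} (g : A → B) (r : A → A → Prop) (r' : B → B → Prop)
    (h : ∀ u v, r u v → g u = g v ∨ r' (g u) (g v)) {x y : A}
    (hxy : Relation.ReflTransGen r x y) : Relation.ReflTransGen r' (g x) (g y) := by
  induction hxy with
  | refl => exact .refl
  | tail _ hbc ih =>
    rcases h _ _ hbc with he | hr
    · exact he ▸ ih
    · exact ih.tail hr

/-- let `Δ` be a root system with base `Sg`, `I ⊆ J ⊆ Sg`, projections
`πI`, `πJ` with induced map `f` satisfying `πJ = f ∘ πI`, and `ν` a nonzero element of
`πJ(Δ)`.  If the fiber graph `Γ^ν_{Δ,Sg,J}` (vertices `πJ⁻¹(ν) ∩ Δ`, edges between roots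
differing by an element of `±J`) is connected, then the fiber graph
`Γ^ν_{πI(Δ), πI(Sg)\{0}, πI(J)\{0}}` in the quotient is connected. -/
theorem stmt11 (Δ Sg I J : Set V) (hΔ : IsRootSystem Δ) (hSg : IsBase Δ Sg)
    (hIJ : I ⊆ J) (hJSg : J ⊆ Sg)
    (f : (V ⧸ Submodule.span ℝ I) → (V ⧸ Submodule.span ℝ J))
    (hf : ∀ v : V, f ((Submodule.span ℝ I).mkQ v) = (Submodule.span ℝ J).mkQ v)
    (ν : V ⧸ Submodule.span ℝ J) (hν : ν ≠ 0) (hνΔ : ν ∈ (Submodule.span ℝ J).mkQ '' Δ)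
    (hconn : ∀ x ∈ {α ∈ Δ | (Submodule.span ℝ J).mkQ α = ν},
      ∀ y ∈ {α ∈ Δ | (Submodule.span ℝ J).mkQ α = ν},
        Relation.ReflTransGen (fun u v =>
          u ∈ {α ∈ Δ | (Submodule.span ℝ J).mkQ α = ν} ∧
          v ∈ {α ∈ Δ | (Submodule.span ℝ J).mkQ α = ν} ∧
          u - v ∈ J ∪ (-J)) x y) :
    ∀ a ∈ {x ∈ (Submodule.span ℝ I).mkQ '' Δ | f x = ν},
      ∀ b ∈ {x ∈ (Submodule.span ℝ I).mkQ '' Δ | f x = ν},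
        Relation.ReflTransGen (fun a b =>
          a ∈ {x ∈ (Submodule.span ℝ I).mkQ '' Δ | f x = ν} ∧
          b ∈ {x ∈ (Submodule.span ℝ I).mkQ '' Δ | f x = ν} ∧
          a - b ∈ ((((Submodule.span ℝ I).mkQ '' J) \ {0}) ∪
            (-(((Submodule.span ℝ I).mkQ '' J) \ {0})))) a b := by
  intro a ha b hb
  obtain ⟨⟨α, hαΔ, rfl⟩, hfa⟩ := ha
  obtain ⟨⟨β, hβΔ, rfl⟩, hfb⟩ := hb
  rw [hf] at hfa hfb
  refine map_path' ((Submodule.span ℝ I).mkQ) _ _ ?_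
    (hconn α ⟨hαΔ, hfa⟩ β ⟨hβΔ, hfb⟩)
  rintro u v ⟨⟨huΔ, huν⟩, ⟨hvΔ, hvν⟩, huv⟩
  set πI := (Submodule.span ℝ I).mkQ with hπI
  by_cases hz : πI u = πI v
  · exact Or.inl hz
  refine Or.inr ⟨⟨⟨u, huΔ, rfl⟩, by rw [hf]; exact huν⟩,
    ⟨⟨v, hvΔ, rfl⟩, by rw [hf]; exact hvν⟩, ?_⟩
  have hsub : πI u - πI v = πI (u - v) := (map_sub πI u v).symm
  have hnz : πI u - πI v ≠ 0 := sub_ne_zero.mpr hz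
  rcases huv with hJ | hJ
  · exact Or.inl ⟨⟨u - v, hJ, hsub.symm⟩, by simpa using hsub ▸ hnz⟩
  · refine Or.inr ?_
    rw [Set.mem_neg]
    have hvu : v - u ∈ J := by simpa [neg_sub] using Set.neg_mem_neg.mpr hJ
    have hsub' : -(πI u - πI v) = πI (v - u) := by
      rw [neg_sub, map_sub]
    exact ⟨⟨v - u, hvu, hsub'.symm⟩, by simpa [hsub'] using neg_ne_zero.mpr hnz⟩
end
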